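/- arXiv:1706.05777 — 5 statements merged into one kernel-verified Lean document; each statement's English description precedes it below -/
import Mathlib

section
/- Let M be a smooth matrix-valued map from an open set U in ℝ^m to the space of r×r real matrices, and suppose M(p) has rank r−1 at a point p. Then there exist a neighborhood V of p and a smooth vector-valued map η : V → ℝ^r such that for every q in V with det M(q) = 0 and rank M(q) = r−1, the vector η(q) is nonzero and lies in the kernel of M(q). -/
attribute [local instance] Matrix.normedAddCommGroup Matrix.normedSpace

open Matrix

/-- det of products of transvections is 1 -/
lemma det_transvec_list_prod {r : ℕ} (L : List (Matrix.TransvectionStruct (Fin r) ℝ)) :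
    ((L.map Matrix.TransvectionStruct.toMatrix).prod).det = 1 := by
  induction L with
  | nil => simp
  | cons t L ih => simp [Matrix.det_mul, ih, Matrix.TransvectionStruct.det]

/-- If a square real matrix has rank `r - 1` with `0 < r`, its adjugate is nonzero. -/
lemma adjugate_ne_zero_of_rank {r : ℕ} (hr : 0 < r) (A : Matrix (Fin r) (Fin r) ℝ)
    (h : A.rank = r - 1) : A.adjugate ≠ 0 := by
  obtain ⟨L, L', D, hA⟩ := Matrix.Pivot.exists_list_transvec_mul_diagonal_mul_list_transvec A
  set P := (L.map Matrix.TransvectionStruct.toMatrix).prod with hP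
  set Q := (L'.map Matrix.TransvectionStruct.toMatrix).prod with hQ
  have hdP : P.det = 1 := det_transvec_list_prod L
  have hdQ : Q.det = 1 := det_transvec_list_prod L'
  have huP : IsUnit P.det := by rw [hdP]; exact isUnit_one
  have huQ : IsUnit Q.det := by rw [hdQ]; exact isUnit_one
  have hrD : (Matrix.diagonal D).rank = r - 1 := by
    have : A.rank = (Matrix.diagonal D).rank := by
      rw [hA, Matrix.rank_mul_eq_left_of_isUnit_det _ _ huQ,
        Matrix.rank_mul_eq_right_of_isUnit_det _ _ huP]
    rw [← this, h]
  -- exactly one zero entry of D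
  rw [Matrix.rank_diagonal] at hrD
  have hcard : Fintype.card {i // D i = 0} = 1 := by
    have e : Fintype.card {i // D i = 0} = Fintype.card {i // ¬ D i ≠ 0} :=
      Fintype.card_congr (Equiv.subtypeEquivRight fun i => by simp)
    rw [e, Fintype.card_subtype_compl, hrD, Fintype.card_fin]
    omega
  obtain ⟨⟨i0, hi0⟩, hi0u⟩ := Fintype.card_eq_one_iff.mp hcard
  have hne : ∀ j, j ≠ i0 → D j ≠ 0 := by
    intro j hj hDj
    exact hj (congrArg Subtype.val (hi0u ⟨j, hDj⟩))
  have hDadj : (Matrix.diagonal D).adjugate ≠ 0 := by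
    intro hzero
    have : (Matrix.diagonal D).adjugate i0 i0 = 0 := by rw [hzero]; rfl
    rw [Matrix.adjugate_diagonal, Matrix.diagonal_apply_eq] at this
    exact Finset.prod_ne_zero_iff.mpr
      (fun j hj => hne j (Finset.ne_of_mem_erase hj)) this
  -- adjugates of P, Q are units
  have huaP : IsUnit P.adjugate := by
    rw [Matrix.isUnit_iff_isUnit_det, Matrix.det_adjugate, hdP]
    simp
  have huaQ : IsUnit Q.adjugate := by
    rw [Matrix.isUnit_iff_isUnit_det, Matrix.det_adjugate, hdQ]
    simp
  intro hAadj
  apply hDadj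
  have : A.adjugate = Q.adjugate * ((Matrix.diagonal D).adjugate * P.adjugate) := by
    rw [hA, Matrix.adjugate_mul_distrib, Matrix.adjugate_mul_distrib]
  rw [hAadj] at this
  have h3 : (Matrix.diagonal D).adjugate * P.adjugate = 0 :=
    huaQ.mul_left_cancel (by rw [← this, mul_zero])
  have h4 : (Matrix.diagonal D).adjugate * P.adjugate = 0 * P.adjugate := by
    rw [h3, zero_mul]
  exact huaP.mul_right_cancel h4

/-- entrywise smoothness implies smoothness of determinant -/
lemma contDiffOn_det_entries {m r : ℕ} {f : (Fin m → ℝ) → Matrix (Fin r) (Fin r) ℝ}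
    {s : Set (Fin m → ℝ)} (hf : ∀ i j, ContDiffOn ℝ (⊤ : ℕ∞) (fun q => f q i j) s) :
    ContDiffOn ℝ (⊤ : ℕ∞) (fun q => (f q).det) s := by
  simp_rw [Matrix.det_apply']
  apply ContDiffOn.sum
  intro σ _
  apply ContDiffOn.mul contDiffOn_const
  intro x hx
  exact contDiffWithinAt_prod (fun i _ => (hf (σ i) i) x hx)

/-- Local existence of a null section at a corank-one singular point of a
matrix-valued map: if `M p` has rank `r - 1`, then on some neighborhood `V` of `p`
there is a smooth vector-valued map `η` which, at every point `q ∈ V ∩ U` where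
`M q` is singular of rank `r - 1`, is a nonzero vector in the kernel of `M q`. -/
theorem null_section_exists
    {m r : ℕ} (U : Set (Fin m → ℝ)) (hU : IsOpen U)
    (M : (Fin m → ℝ) → Matrix (Fin r) (Fin r) ℝ)
    (hM : ContDiffOn ℝ (⊤ : ℕ∞) M U)
    (p : Fin m → ℝ) (hp : p ∈ U)
    (hrank : (M p).rank = r - 1) :
    ∃ V : Set (Fin m → ℝ), V ∈ nhds p ∧
      ∃ η : (Fin m → ℝ) → (Fin r → ℝ), ContDiffOn ℝ (⊤ : ℕ∞) η V ∧
        ∀ q ∈ V ∩ U, (M q).det = 0 → (M q).rank = r - 1 →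
          η q ≠ 0 ∧ (M q).mulVec (η q) = 0 := by
  rcases Nat.eq_zero_or_pos r with hr | hr
  · subst hr
    refine ⟨Set.univ, Filter.univ_mem, 0, contDiffOn_const, ?_⟩
    intro q _ hdet _
    exfalso
    rw [Matrix.det_isEmpty] at hdet
    exact one_ne_zero hdet
  -- entrywise smoothness of M
  have hMij : ∀ i j, ContDiffOn ℝ (⊤ : ℕ∞) (fun q => M q i j) U := by
    intro i j
    have h1 : ContDiffOn ℝ (⊤ : ℕ∞) (fun q => M q i) U := by
      exact (contDiffOn_pi.mp hM) i
    exact (contDiffOn_pi.mp h1) j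
  -- smoothness of each adjugate entry
  have hadj : ∀ i j, ContDiffOn ℝ (⊤ : ℕ∞) (fun q => (M q).adjugate i j) U := by
    intro i j
    simp_rw [Matrix.adjugate_apply]
    apply contDiffOn_det_entries
    intro a b
    rcases eq_or_ne a j with rfl | haj
    · simp_rw [Matrix.updateRow_self]
      exact contDiffOn_const
    · simp_rw [Matrix.updateRow_ne haj]
      exact hMij a b
  -- find a nonzero entry of adjugate (M p)
  have hAp : (M p).adjugate ≠ 0 := adjugate_ne_zero_of_rank hr (M p) hrank
  have : ∃ i j, (M p).adjugate i j ≠ 0 := by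
    by_contra hc
    push_neg at hc
    exact hAp (by ext i j; exact hc i j)
  obtain ⟨i0, j0, hij⟩ := this
  -- the neighborhood
  set g : (Fin m → ℝ) → ℝ := fun q => (M q).adjugate i0 j0 with hg
  have hgc : ContinuousOn g U := (hadj i0 j0).continuousOn
  set V : Set (Fin m → ℝ) := U ∩ g ⁻¹' {0}ᶜ with hV
  have hVopen : IsOpen V := hgc.isOpen_inter_preimage hU isOpen_compl_singleton
  have hpV : p ∈ V := ⟨hp, by simpa [hg] using hij⟩
  refine ⟨V, hVopen.mem_nhds hpV, fun q k => (M q).adjugate k j0, ?_, ?_⟩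
  · rw [contDiffOn_pi]
    intro k
    exact (hadj k j0).mono (Set.inter_subset_left)
  · rintro q ⟨⟨hqU, hgq⟩, -⟩ hdet -
    constructor
    · intro h0
      apply hgq
      have := congrFun h0 i0
      simpa [hg] using this
    · ext k
      have : (M q).mulVec (fun l => (M q).adjugate l j0) k
          = ((M q) * (M q).adjugate) k j0 := by
        simp [Matrix.mulVec, Matrix.mul_apply, dotProduct]
      rw [this, Matrix.mul_adjugate, hdet]
      simp
end

section
/- Let λ be a smooth function on an open set U ⊆ ℝ^m, let η be a smooth vector field on U, and let p satisfy λ(p) = 0, dλ(p) ≠ 0, and (ηλ)(p) = 0. Let η̃ = aη + b where a is a smooth nowhere-zero function and b is a smooth vector field vanishing on the zero set S = {λ = 0}. Then (η̃²λ)(p) = a(p)² · (η²λ)(p). In particular (η̃²λ)(p) ≠ 0 if and only if (η²λ)(p) ≠ 0. -/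
/-- Directional derivative of a function along a vector field. -/
noncomputable def dDir {m : ℕ} (η : (Fin m → ℝ) → (Fin m → ℝ))
    (f : (Fin m → ℝ) → ℝ) : (Fin m → ℝ) → ℝ :=
  fun q => fderiv ℝ f q (η q)

/-- If `b` is smooth and vanishes on the zero set of `lam`, `lam p = 0`,
`dlam p ≠ 0`, then the derivative of `b` at `p` kills `ker (fderiv lam p)`. -/
lemma tangent_fderiv_zero {m : ℕ} {U : Set (Fin m → ℝ)} (hU : IsOpen U)
    {lam : (Fin m → ℝ) → ℝ} (hlam : ContDiffOn ℝ (⊤ : ℕ∞) lam U)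
    {b : (Fin m → ℝ) → (Fin m → ℝ)} (hb : ContDiffOn ℝ (⊤ : ℕ∞) b U)
    (hbS : ∀ q ∈ U, lam q = 0 → b q = 0)
    {p : Fin m → ℝ} (hp : p ∈ U) (hs : lam p = 0)
    (hnd : fderiv ℝ lam p ≠ 0)
    {v : Fin m → ℝ} (hv : fderiv ℝ lam p v = 0) :
    fderiv ℝ b p v = 0 := by
  have hmem : U ∈ nhds p := hU.mem_nhds hp
  set f' := fderiv ℝ lam p with hf'def
  have hfd : HasStrictFDerivAt lam f' p :=
    (hlam.contDiffAt hmem).hasStrictFDerivAt (by simp)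
  obtain ⟨x, hx⟩ : ∃ x, f' x ≠ 0 := by
    by_contra h
    push_neg at h
    exact hnd (ContinuousLinearMap.ext fun x => by simp [h x])
  have hrange : LinearMap.range (f' : (Fin m → ℝ) →ₗ[ℝ] ℝ) = ⊤ := by
    rw [LinearMap.range_eq_top]
    intro y
    exact ⟨(y / f' x) • x, by simp [smul_eq_mul, div_mul_cancel₀ _ hx]⟩
  set φ : LinearMap.ker (f' : (Fin m → ℝ) →ₗ[ℝ] ℝ) → (Fin m → ℝ) :=
    hfd.implicitFunction lam f' hrange (lam p) with hφdef
  have himg : φ 0 = p := hfd.implicitFunction_apply_image hrange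
  have hφ0 : HasStrictFDerivAt φ (LinearMap.ker (f' : (Fin m → ℝ) →ₗ[ℝ] ℝ)).subtypeL 0 := by
    have := hfd.to_implicitFunction hrange
    exact this
  have htends : Filter.Tendsto (fun z : LinearMap.ker (f' : (Fin m → ℝ) →ₗ[ℝ] ℝ) => ((lam p : ℝ), z))
      (nhds 0) (nhds (lam p, 0)) := tendsto_const_nhds.prodMk_nhds Filter.tendsto_id
  have he1 : ∀ᶠ z in nhds (0 : LinearMap.ker (f' : (Fin m → ℝ) →ₗ[ℝ] ℝ)), lam (φ z) = lam p :=
    htends.eventually (hfd.map_implicitFunction_eq hrange)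
  have hc : Filter.Tendsto φ (nhds 0) (nhds p) := by
    have := hφ0.continuousAt
    rwa [ContinuousAt, himg] at this
  have he2 : ∀ᶠ z in nhds (0 : LinearMap.ker (f' : (Fin m → ℝ) →ₗ[ℝ] ℝ)), φ z ∈ U := hc hmem
  have hev : (b ∘ φ) =ᶠ[nhds (0 : LinearMap.ker (f' : (Fin m → ℝ) →ₗ[ℝ] ℝ))] fun _ => 0 := by
    filter_upwards [he1, he2] with z h1 h2
    exact hbS _ h2 (h1.trans hs)
  have hbAt : DifferentiableAt ℝ b p :=
    (hb.contDiffAt hmem).differentiableAt (by simp)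
  have hcomp : HasFDerivAt (b ∘ φ)
      ((fderiv ℝ b p).comp (LinearMap.ker (f' : (Fin m → ℝ) →ₗ[ℝ] ℝ)).subtypeL) 0 := by
    have hb' : HasFDerivAt b (fderiv ℝ b p) (φ 0) := by
      rw [himg]; exact hbAt.hasFDerivAt
    exact hb'.comp 0 hφ0.hasFDerivAt
  have hzero : HasFDerivAt (b ∘ φ) (0 : LinearMap.ker (f' : (Fin m → ℝ) →ₗ[ℝ] ℝ) →L[ℝ] (Fin m → ℝ)) 0 :=
    (hasFDerivAt_const (0 : Fin m → ℝ) (0 : LinearMap.ker (f' : (Fin m → ℝ) →ₗ[ℝ] ℝ))).congr_of_eventuallyEq hev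
  have huniq : (fderiv ℝ b p).comp (LinearMap.ker (f' : (Fin m → ℝ) →ₗ[ℝ] ℝ)).subtypeL
      = (0 : LinearMap.ker (f' : (Fin m → ℝ) →ₗ[ℝ] ℝ) →L[ℝ] (Fin m → ℝ)) := hcomp.unique hzero
  have hvmem : v ∈ LinearMap.ker (f' : (Fin m → ℝ) →ₗ[ℝ] ℝ) := LinearMap.mem_ker.2 hv
  have := congrFun (congrArg DFunLike.coe huniq) ⟨v, hvmem⟩
  simpa using this

/-- Independence of the cusp-like condition from the choice of null section:
if `η̃ = a • η + b` with `a` nowhere zero and `b` vanishing on `S = {λ = 0}`,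
then at a non-degenerate singular point `p` with `(ηλ)(p) = 0` one has
`(η̃²λ)(p) = a(p)² (η²λ)(p)`; in particular the two second derivatives vanish
simultaneously. -/
theorem cusp_like_independent_of_null_section
    {m : ℕ} (U : Set (Fin m → ℝ)) (hU : IsOpen U)
    (lam : (Fin m → ℝ) → ℝ) (hlam : ContDiffOn ℝ (⊤ : ℕ∞) lam U)
    (η b : (Fin m → ℝ) → (Fin m → ℝ)) (a : (Fin m → ℝ) → ℝ)
    (hη : ContDiffOn ℝ (⊤ : ℕ∞) η U) (hb : ContDiffOn ℝ (⊤ : ℕ∞) b U)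
    (ha : ContDiffOn ℝ (⊤ : ℕ∞) a U) (ha0 : ∀ q ∈ U, a q ≠ 0)
    (hbS : ∀ q ∈ U, lam q = 0 → b q = 0)
    (p : Fin m → ℝ) (hp : p ∈ U)
    (hs : lam p = 0) (hnd : fderiv ℝ lam p ≠ 0)
    (h1 : dDir η lam p = 0) :
    dDir (fun q => a q • η q + b q) (dDir (fun q => a q • η q + b q) lam) p
      = (a p) ^ 2 * dDir η (dDir η lam) p ∧
    (dDir (fun q => a q • η q + b q) (dDir (fun q => a q • η q + b q) lam) p ≠ 0
      ↔ dDir η (dDir η lam) p ≠ 0) := by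
  have hmem : U ∈ nhds p := hU.mem_nhds hp
  have bp : b p = 0 := hbS p hp hs
  have hDlam : ContDiffOn ℝ (⊤ : ℕ∞) (fderiv ℝ lam) U :=
    hlam.fderiv_of_isOpen hU (by simp)
  have hDlamAt : DifferentiableAt ℝ (fderiv ℝ lam) p :=
    (hDlam.contDiffAt hmem).differentiableAt (by simp)
  have hηAt : DifferentiableAt ℝ η p := (hη.contDiffAt hmem).differentiableAt (by simp)
  have hbAt : DifferentiableAt ℝ b p := (hb.contDiffAt hmem).differentiableAt (by simp)
  have haAt : DifferentiableAt ℝ a p := (ha.contDiffAt hmem).differentiableAt (by simp)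
  have hgAt : DifferentiableAt ℝ (dDir η lam) p := hDlamAt.clm_apply hηAt
  have hhAt : DifferentiableAt ℝ (fun q => fderiv ℝ lam q (b q)) p :=
    hDlamAt.clm_apply hbAt
  have hg' : dDir (fun q => a q • η q + b q) lam
      = fun q => a q * dDir η lam q + fderiv ℝ lam q (b q) := by
    funext q
    simp [dDir, smul_eq_mul]
  have hbv : fderiv ℝ b p (η p) = 0 :=
    tangent_fderiv_zero hU hlam hb hbS hp hs hnd h1
  have main : dDir (fun q => a q • η q + b q) (dDir (fun q => a q • η q + b q) lam) p
      = (a p) ^ 2 * dDir η (dDir η lam) p := by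
    rw [hg']
    show fderiv ℝ (fun q => a q * dDir η lam q + fderiv ℝ lam q (b q)) p
        (a p • η p + b p) = _
    rw [bp, add_zero,
      fderiv_fun_add (by exact haAt.mul hgAt) hhAt,
      fderiv_fun_mul haAt hgAt,
      fderiv_clm_apply hDlamAt hbAt]
    simp only [ContinuousLinearMap.add_apply, ContinuousLinearMap.smul_apply,
      ContinuousLinearMap.comp_apply, ContinuousLinearMap.flip_apply, h1, bp,
      map_smul, hbv, smul_zero, map_zero, smul_eq_mul, mul_zero, zero_mul,
      add_zero, zero_add, zero_smul]
    show a p * (a p * fderiv ℝ (dDir η lam) p (η p)) = _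
    rw [show dDir η (dDir η lam) p = fderiv ℝ (dDir η lam) p (η p) from rfl]
    ring
  refine ⟨main, ?_⟩
  rw [main]
  constructor
  · intro h h0
    exact h (by rw [h0, mul_zero])
  · intro h
    exact mul_ne_zero (pow_ne_zero 2 (ha0 p hp)) h
end

section
/- Let λ be a smooth function on U ⊆ ℝ^m, η a smooth vector field, p a point with λ(p) = 0, dλ(p) ≠ 0, (ηλ)(p) = 0 and (η²λ)(p) = 0. Let η̃ = aη + b with a smooth and nonvanishing and b a smooth vector field vanishing on S = {λ = 0}. Then (η̃³λ)(p) = a(p)³ · (η³λ)(p). -/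
open Filter Topology

/-- Smoothness of directional derivatives. -/
lemma contDiffOn_dDir {m : ℕ} {U : Set (Fin m → ℝ)} (hU : IsOpen U)
    {f : (Fin m → ℝ) → ℝ} {X : (Fin m → ℝ) → (Fin m → ℝ)}
    (hf : ContDiffOn ℝ (⊤ : ℕ∞) f U) (hX : ContDiffOn ℝ (⊤ : ℕ∞) X U) :
    ContDiffOn ℝ (⊤ : ℕ∞) (dDir X f) U :=
  (hf.fderiv_of_isOpen hU (by simp)).clm_apply hX

lemma dAt {m : ℕ} {U : Set (Fin m → ℝ)} (hU : IsOpen U)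
    {f : (Fin m → ℝ) → ℝ} (hf : ContDiffOn ℝ (⊤ : ℕ∞) f U) {q : Fin m → ℝ} (hq : q ∈ U) :
    DifferentiableAt ℝ f q :=
  (hf.contDiffAt (hU.mem_nhds hq)).differentiableAt (by simp)

/-- If a differentiable function `g` vanishes on the zero set of `lam` inside an open set `U`,
and `fderiv lam q ≠ 0` at a point `q` of the zero set, then `fderiv g q` vanishes on the
kernel of `fderiv lam q`. -/
lemma vanishing_deriv {m : ℕ} {U : Set (Fin m → ℝ)} (hU : IsOpen U)
    {lam g : (Fin m → ℝ) → ℝ} {q : Fin m → ℝ} (hq : q ∈ U)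
    (hlam : ContDiffOn ℝ (⊤ : ℕ∞) lam U)
    (hg : DifferentiableAt ℝ g q)
    (hgS : ∀ x ∈ U, lam x = 0 → g x = 0)
    (hq0 : lam q = 0) (hf'0 : fderiv ℝ lam q ≠ 0)
    {v : Fin m → ℝ} (hv : fderiv ℝ lam q v = 0) :
    fderiv ℝ g q v = 0 := by
  set f' := fderiv ℝ lam q with hf'
  have hstrict : HasStrictFDerivAt lam f' q :=
    (hlam.contDiffAt (hU.mem_nhds hq)).hasStrictFDerivAt (by simp)
  obtain ⟨u, hu⟩ : ∃ u, f' u ≠ 0 := by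
    by_contra h
    push_neg at h
    exact hf'0 (ContinuousLinearMap.ext fun x => by simp [h x])
  have hrange : f'.range = ⊤ := by
    rw [LinearMap.range_eq_top]
    intro t
    exact ⟨(t / f' u) • u, by simp [map_smul, smul_eq_mul, div_mul_cancel₀ _ hu]⟩
  set z : f'.ker := ⟨v, LinearMap.mem_ker.2 hv⟩ with hz
  set φ0 : f'.ker → (Fin m → ℝ) :=
    hstrict.implicitFunction lam f' hrange (lam q) with hφ0
  set γ : ℝ → (Fin m → ℝ) := fun t => φ0 (t • z) with hγdef
  have hφ := hstrict.to_implicitFunction hrange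
  set ℓ : ℝ →L[ℝ] (f'.ker) :=
    (ContinuousLinearMap.id ℝ ℝ).smulRight z with hℓ
  have hin : HasFDerivAt (fun t : ℝ => t • z) ℓ 0 := by
    exact ℓ.hasFDerivAt (x := (0:ℝ))
  set D : ℝ →L[ℝ] (Fin m → ℝ) := (f'.ker).subtypeL.comp ℓ with hD
  have hγ : HasFDerivAt γ D 0 := by
    refine HasFDerivAt.comp 0 ?_ hin
    rw [zero_smul]
    exact hφ.hasFDerivAt
  have hγ0 : γ 0 = q := by
    simp only [hγdef, zero_smul]
    exact hstrict.implicitFunction_apply_image hrange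
  have hU' : ∀ᶠ t in 𝓝 (0:ℝ), γ t ∈ U :=
    hγ.continuousAt.preimage_mem_nhds (hU.mem_nhds (by rwa [hγ0]))
  have hlam0 : ∀ᶠ t in 𝓝 (0:ℝ), lam (γ t) = 0 := by
    have hmap := hstrict.map_implicitFunction_eq hrange
    have htend : Filter.Tendsto (fun t : ℝ => ((lam q, t • z) : ℝ × f'.ker))
        (𝓝 0) (𝓝 (lam q, 0)) := by
      refine Filter.Tendsto.prodMk_nhds tendsto_const_nhds ?_
      simpa using hin.continuousAt.tendsto
    filter_upwards [htend.eventually hmap] with t ht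
    exact ht.trans hq0
  have hg0 : (fun t => g (γ t)) =ᶠ[𝓝 (0:ℝ)] fun _ => (0:ℝ) := by
    filter_upwards [hU', hlam0] with t h1 h2 using hgS _ h1 h2
  have hcomp : HasFDerivAt (fun t => g (γ t)) ((fderiv ℝ g q).comp D) 0 := by
    refine HasFDerivAt.comp 0 ?_ hγ
    rw [hγ0]
    exact hg.hasFDerivAt
  have hzero : (fderiv ℝ g q).comp D = 0 :=
    (hcomp.congr_of_eventuallyEq hg0.symm).unique (hasFDerivAt_const 0 0)
  have := congrArg (fun T : ℝ →L[ℝ] ℝ => T 1) hzero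
  simpa [hD, hℓ, hz] using this

/-- Two linear functionals with nested kernels are proportional (applied form). -/
lemma functional_eq {E : Type*} [NormedAddCommGroup E] [NormedSpace ℝ E]
    (f h : E →L[ℝ] ℝ) {u : E} (hu : h u ≠ 0)
    (hker : ∀ w, h w = 0 → f w = 0) (v : E) :
    f v = f u / h u * h v := by
  have h1 : h (v - (h v / h u) • u) = 0 := by
    simp only [map_sub, map_smul, smul_eq_mul]
    field_simp
    ring
  have h2 := hker _ h1
  simp only [map_sub, map_smul, smul_eq_mul, sub_eq_zero] at h2
  rw [h2]
  field_simp

/-- Derivative of `u * v + w` in a direction. -/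
lemma fderiv_mul_add' {m : ℕ} {u v w : (Fin m → ℝ) → ℝ} {q x : Fin m → ℝ}
    (hu : DifferentiableAt ℝ u q) (hv : DifferentiableAt ℝ v q)
    (hw : DifferentiableAt ℝ w q) :
    fderiv ℝ (fun y => u y * v y + w y) q x
      = fderiv ℝ u q x * v q + u q * fderiv ℝ v q x + fderiv ℝ w q x := by
  rw [fderiv_fun_add (show DifferentiableAt ℝ (fun y => u y * v y) q from hu.mul hv) hw, fderiv_fun_mul hu hv]
  simp only [ContinuousLinearMap.add_apply, ContinuousLinearMap.smul_apply, smul_eq_mul]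
  ring

/-- Second-order vanishing: if `g` vanishes on the level set `{lam = 0}` and `p` is a
singular point of `lam` along `η` of order two, then `η(η g)(p) = 0`. -/
lemma second_order_vanish {m : ℕ} {U : Set (Fin m → ℝ)} (hU : IsOpen U)
    {lam g : (Fin m → ℝ) → ℝ} {η : (Fin m → ℝ) → (Fin m → ℝ)} {p : Fin m → ℝ}
    (hp : p ∈ U) (hlam : ContDiffOn ℝ (⊤ : ℕ∞) lam U) (hg : ContDiffOn ℝ (⊤ : ℕ∞) g U)
    (hη : ContDiffOn ℝ (⊤ : ℕ∞) η U)
    (hgS : ∀ x ∈ U, lam x = 0 → g x = 0)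
    (hs : lam p = 0) (hnd : fderiv ℝ lam p ≠ 0)
    (h1 : dDir η lam p = 0) (h2 : dDir η (dDir η lam) p = 0) :
    dDir η (dDir η g) p = 0 := by
  obtain ⟨u, hu⟩ : ∃ u, fderiv ℝ lam p u ≠ 0 := by
    by_contra h
    push_neg at h
    exact hnd (ContinuousLinearMap.ext fun x => by simp [h x])
  set A : (Fin m → ℝ) → ℝ := dDir (fun _ => u) g with hA
  set B : (Fin m → ℝ) → ℝ := dDir (fun _ => u) lam with hB
  have hAsm : ContDiffOn ℝ (⊤ : ℕ∞) A U := contDiffOn_dDir hU hg contDiffOn_const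
  have hBsm : ContDiffOn ℝ (⊤ : ℕ∞) B U := contDiffOn_dDir hU hlam contDiffOn_const
  set c : (Fin m → ℝ) → ℝ := fun q => A q / B q with hc
  set ψ : (Fin m → ℝ) → ℝ := fun q => dDir η g q - c q * dDir η lam q with hψ
  set V : Set (Fin m → ℝ) := U ∩ B ⁻¹' ({0}ᶜ) with hV
  have hVopen : IsOpen V :=
    (hBsm.continuousOn).isOpen_inter_preimage hU isOpen_compl_singleton
  have hpV : p ∈ V := ⟨hp, by simpa [hB, dDir] using hu⟩
  have hψS : ∀ x ∈ V, lam x = 0 → ψ x = 0 := by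
    rintro x ⟨hxU, hxB⟩ hx0
    have hxB' : B x ≠ 0 := by simpa using hxB
    have hfx : fderiv ℝ lam x ≠ 0 := by
      intro h
      exact hxB' (by simp [hB, dDir, h])
    have hker : ∀ w, fderiv ℝ lam x w = 0 → fderiv ℝ g x w = 0 := fun w hw =>
      vanishing_deriv hU hxU hlam (dAt hU hg hxU) hgS hx0 hfx hw
    have heq := functional_eq (fderiv ℝ g x) (fderiv ℝ lam x) hxB' hker (η x)
    simp only [hψ, hc, hA, hB, dDir, sub_eq_zero]
    exact heq
  have hdg : DifferentiableAt ℝ (dDir η g) p := dAt hU (contDiffOn_dDir hU hg hη) hp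
  have hdL1 : DifferentiableAt ℝ (dDir η lam) p := dAt hU (contDiffOn_dDir hU hlam hη) hp
  have hBp : B p ≠ 0 := by simpa [hB, dDir] using hu
  have hcd : DifferentiableAt ℝ c p := by
    have : c = fun q => A q * (B q)⁻¹ := by
      funext q; simp only [hc, div_eq_mul_inv]
    rw [this]
    exact (dAt hU hAsm hp).mul ((dAt hU hBsm hp).inv hBp)
  have hψd : DifferentiableAt ℝ ψ p := hdg.sub (hcd.mul hdL1)
  have hψ0 : fderiv ℝ ψ p (η p) = 0 := by
    refine vanishing_deriv hVopen hpV (hlam.mono Set.inter_subset_left) hψd hψS hs ?_ h1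
    -- fderiv of lam is the same whether computed w.r.t. nothing; it's just fderiv
    exact hnd
  have hrw : dDir η g = fun q => c q * dDir η lam q + ψ q := by
    funext q
    simp only [hψ]
    ring
  have : dDir η (dDir η g) p = fderiv ℝ (dDir η g) p (η p) := rfl
  rw [this, hrw, fderiv_mul_add' hcd hdL1 hψd]
  have hL2p : fderiv ℝ (dDir η lam) p (η p) = 0 := h2
  rw [h1, hL2p, hψ0]
  ring

/-- Independence of the swallowtail-like condition from the choice of null section:
if `η̃ = a • η + b` with `a` nowhere zero and `b` vanishing on `S = {λ = 0}`, then at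
a non-degenerate singular point `p` with `(ηλ)(p) = (η²λ)(p) = 0` one has
`(η̃³λ)(p) = a(p)³ (η³λ)(p)`. -/
theorem swallowtail_like_independent_of_null_section
    {m : ℕ} (U : Set (Fin m → ℝ)) (hU : IsOpen U)
    (lam : (Fin m → ℝ) → ℝ) (hlam : ContDiffOn ℝ (⊤ : ℕ∞) lam U)
    (η b : (Fin m → ℝ) → (Fin m → ℝ)) (a : (Fin m → ℝ) → ℝ)
    (hη : ContDiffOn ℝ (⊤ : ℕ∞) η U) (hb : ContDiffOn ℝ (⊤ : ℕ∞) b U)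
    (ha : ContDiffOn ℝ (⊤ : ℕ∞) a U) (ha0 : ∀ q ∈ U, a q ≠ 0)
    (hbS : ∀ q ∈ U, lam q = 0 → b q = 0)
    (p : Fin m → ℝ) (hp : p ∈ U)
    (hs : lam p = 0) (hnd : fderiv ℝ lam p ≠ 0)
    (h1 : dDir η lam p = 0) (h2 : dDir η (dDir η lam) p = 0) :
    dDir (fun q => a q • η q + b q)
        (dDir (fun q => a q • η q + b q)
          (dDir (fun q => a q • η q + b q) lam)) p
      = (a p) ^ 3 * dDir η (dDir η (dDir η lam)) p := by
  set w : (Fin m → ℝ) → (Fin m → ℝ) := fun q => a q • η q + b q with hwdef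
  have hw : ContDiffOn ℝ (⊤ : ℕ∞) w U := (ha.smul hη).add hb
  have hL1 : ContDiffOn ℝ (⊤ : ℕ∞) (dDir η lam) U := contDiffOn_dDir hU hlam hη
  have hL2 : ContDiffOn ℝ (⊤ : ℕ∞) (dDir η (dDir η lam)) U := contDiffOn_dDir hU hL1 hη
  set g : (Fin m → ℝ) → ℝ := dDir b lam with hgdef
  have hg : ContDiffOn ℝ (⊤ : ℕ∞) g U := contDiffOn_dDir hU hlam hb
  have hgS : ∀ x ∈ U, lam x = 0 → g x = 0 := fun x hx h0 => by
    simp [hgdef, dDir, hbS x hx h0]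
  set f1 : (Fin m → ℝ) → ℝ := dDir w lam with hf1def
  have hf1sm : ContDiffOn ℝ (⊤ : ℕ∞) f1 U := contDiffOn_dDir hU hlam hw
  have hf1eq : f1 = fun q => a q * dDir η lam q + g q := by
    funext q
    simp [hf1def, hgdef, dDir, hwdef, map_add, map_smul, smul_eq_mul]
  set F1η : (Fin m → ℝ) → ℝ := dDir η f1 with hF1ηdef
  have hF1ηsm : ContDiffOn ℝ (⊤ : ℕ∞) F1η U := contDiffOn_dDir hU hf1sm hη
  set F1b : (Fin m → ℝ) → ℝ := dDir b f1 with hF1bdef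
  have hF1bsm : ContDiffOn ℝ (⊤ : ℕ∞) F1b U := contDiffOn_dDir hU hf1sm hb
  have hF1bS : ∀ x ∈ U, lam x = 0 → F1b x = 0 := fun x hx h0 => by
    simp [hF1bdef, dDir, hbS x hx h0]
  set f2 : (Fin m → ℝ) → ℝ := dDir w f1 with hf2def
  have hf2eq : f2 = fun q => a q * F1η q + F1b q := by
    funext q
    simp [hf2def, hF1ηdef, hF1bdef, dDir, hwdef, map_add, map_smul, smul_eq_mul]
  have hf2sm : ContDiffOn ℝ (⊤ : ℕ∞) f2 U := contDiffOn_dDir hU hf1sm hw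
  have hbp : b p = 0 := hbS p hp hs
  -- key vanishing facts at p
  have hgp : fderiv ℝ g p (η p) = 0 :=
    vanishing_deriv hU hp hlam (dAt hU hg hp) hgS hs hnd h1
  have hF1bp : fderiv ℝ F1b p (η p) = 0 :=
    vanishing_deriv hU hp hlam (dAt hU hF1bsm hp) hF1bS hs hnd h1
  have hggp : dDir η (dDir η g) p = 0 :=
    second_order_vanish hU hp hlam hg hη hgS hs hnd h1 h2
  have hL2p : fderiv ℝ (dDir η lam) p (η p) = 0 := h2
  -- F1η p = 0
  have hF1ηp : F1η p = 0 := by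
    have : F1η p = fderiv ℝ f1 p (η p) := rfl
    rw [this, hf1eq,
      fderiv_mul_add' (dAt hU ha hp) (dAt hU hL1 hp) (dAt hU hg hp)]
    rw [h1, hL2p, hgp]
    ring
  -- rewrite F1η on U
  set A1 : (Fin m → ℝ) → ℝ := fun q =>
    dDir η a q * dDir η lam q + (a q * dDir η (dDir η lam) q + dDir η g q) with hA1
  have hF1ηeq : Set.EqOn F1η A1 U := by
    intro q hq
    have : F1η q = fderiv ℝ f1 q (η q) := rfl
    rw [this, hf1eq,
      fderiv_mul_add' (dAt hU ha hq) (dAt hU hL1 hq) (dAt hU hg hq)]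
    simp only [hA1, dDir]
    ring
  have hfd : fderiv ℝ F1η p = fderiv ℝ A1 p :=
    Filter.EventuallyEq.fderiv_eq (Filter.eventuallyEq_of_mem (hU.mem_nhds hp) hF1ηeq)
  -- derivative of A1 at p in direction η p
  have hda2 : DifferentiableAt ℝ (dDir η a) p := dAt hU (contDiffOn_dDir hU ha hη) hp
  have hdL1 : DifferentiableAt ℝ (dDir η lam) p := dAt hU hL1 hp
  have hdL2 : DifferentiableAt ℝ (dDir η (dDir η lam)) p := dAt hU hL2 hp
  have hdg2 : DifferentiableAt ℝ (dDir η g) p := dAt hU (contDiffOn_dDir hU hg hη) hp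
  have hinner : DifferentiableAt ℝ (fun q => a q * dDir η (dDir η lam) q + dDir η g q) p :=
    ((dAt hU ha hp).mul hdL2).add hdg2
  have hA1d : fderiv ℝ A1 p (η p) = a p * dDir η (dDir η (dDir η lam)) p := by
    rw [hA1, fderiv_mul_add' hda2 hdL1 hinner,
      fderiv_mul_add' (dAt hU ha hp) hdL2 hdg2]
    have hL3p : fderiv ℝ (dDir η (dDir η lam)) p (η p)
        = dDir η (dDir η (dDir η lam)) p := rfl
    rw [h1, hL2p, hL3p]
    have : fderiv ℝ (dDir η g) p (η p) = dDir η (dDir η g) p := rfl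
    rw [this, hggp, h2]
    ring
  -- assemble
  have hstep : dDir w f2 p = a p * fderiv ℝ f2 p (η p) := by
    have : dDir w f2 p = fderiv ℝ f2 p (w p) := rfl
    rw [this, hwdef]
    simp [hbp, map_add, map_smul, smul_eq_mul]
  have hf2p : fderiv ℝ f2 p (η p) = a p * (a p * dDir η (dDir η (dDir η lam)) p) := by
    rw [hf2eq,
      fderiv_mul_add' (dAt hU ha hp) (dAt hU hF1ηsm hp) (dAt hU hF1bsm hp)]
    rw [hF1ηp, hF1bp]
    have : fderiv ℝ F1η p (η p) = fderiv ℝ A1 p (η p) := by rw [hfd]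
    rw [this, hA1d]
    ring
  calc dDir w (dDir w (dDir w lam)) p = dDir w f2 p := rfl
    _ = a p * fderiv ℝ f2 p (η p) := hstep
    _ = a p * (a p * (a p * dDir η (dDir η (dDir η lam)) p)) := by rw [hf2p]
    _ = (a p) ^ 3 * dDir η (dDir η (dDir η lam)) p := by ring
end

section
/- Let f : U → ℝ² be smooth on open U ⊆ ℝ³ with coordinates (x,y,z); let e₁ = ∂_x, e₂ = ∂_y − x∂_z span the contact distribution, and set λ = det(f_x, f_y − x f_z). Let η = k₁e₁ + k₂e₂ be a smooth vector field with (k₁(p), k₂(p)) ≠ (0,0) and k₁ e₁f + k₂ e₂f = 0 at p (a null vector of the induced homomorphism). Let X = (λ_y − xλ_z)e₁ − λ_x e₂ − λ∂_z be the Hamilton vector field of λ. If λ(p) = 0, then (ηλ)(p) = det of the 2×2 matrix with columns (k₁(p), k₂(p)) and (−(λ_y − xλ_z)(p), λ_x(p)). Consequently, p is a fold-like singular point (i.e. (ηλ)(p) ≠ 0) if and only if X(p) and η(p) are linearly independent. -/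
/-- Determinant of the 2×2 matrix with columns `v`, `w`. -/
def det2 (v w : ℝ × ℝ) : ℝ := v.1 * w.2 - v.2 * w.1

/-- Partial derivative of a function on `ℝ³ = ℝ×ℝ×ℝ` in a constant direction. -/
noncomputable def pd (w : ℝ × ℝ × ℝ) (f : ℝ × ℝ × ℝ → ℝ) : ℝ × ℝ × ℝ → ℝ :=
  fun q => fderiv ℝ f q w

/-- Fold-like singular points of the homomorphism induced from the contact
structure are characterized by linear independence of the Hamilton vector field
and the null direction. Here `e₁ = ∂_x`, `e₂ = ∂_y − x∂_z`,
`λ = det(f_x, f_y − x f_z)`, `η = k₁e₁ + k₂e₂` is a null vector field at `p`, and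
`X = (λ_y − xλ_z)e₁ − λ_x e₂ − λ∂_z`. -/
theorem contact_fold_like_hamiltonian
    (U : Set (ℝ × ℝ × ℝ)) (hU : IsOpen U)
    (f : ℝ × ℝ × ℝ → ℝ × ℝ) (hf : ContDiffOn ℝ (⊤ : ℕ∞) f U)
    (k₁ k₂ : ℝ × ℝ × ℝ → ℝ)
    (hk₁ : ContDiffOn ℝ (⊤ : ℕ∞) k₁ U) (hk₂ : ContDiffOn ℝ (⊤ : ℕ∞) k₂ U)
    (p : ℝ × ℝ × ℝ) (hp : p ∈ U)
    (lam : ℝ × ℝ × ℝ → ℝ)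
    (hlamdef : lam = fun q =>
      det2 (fderiv ℝ f q (1, 0, 0)) (fderiv ℝ f q (0, 1, -q.1)))
    (hknz : (k₁ p, k₂ p) ≠ (0, 0))
    (hnull : k₁ p • fderiv ℝ f p (1, 0, 0)
        + k₂ p • fderiv ℝ f p (0, 1, -p.1) = 0)
    (hs : lam p = 0) :
    fderiv ℝ lam p (k₁ p, k₂ p, -p.1 * k₂ p)
      = det2 (k₁ p, k₂ p)
          (-(pd (0, 1, 0) lam p - p.1 * pd (0, 0, 1) lam p), pd (1, 0, 0) lam p) ∧
    (fderiv ℝ lam p (k₁ p, k₂ p, -p.1 * k₂ p) ≠ 0 ↔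
      LinearIndependent ℝ
        ![((pd (0, 1, 0) lam p - p.1 * pd (0, 0, 1) lam p) • ((1, 0, 0) : ℝ × ℝ × ℝ)
            - pd (1, 0, 0) lam p • ((0, 1, -p.1) : ℝ × ℝ × ℝ)
            - lam p • ((0, 0, 1) : ℝ × ℝ × ℝ)),
          ((k₁ p, k₂ p, -p.1 * k₂ p) : ℝ × ℝ × ℝ)]) := by
  set L := fderiv ℝ lam p with hL
  set a : ℝ := pd (1, 0, 0) lam p with ha
  set b : ℝ := pd (0, 1, 0) lam p - p.1 * pd (0, 0, 1) lam p with hb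
  have hvec : ((k₁ p, k₂ p, -p.1 * k₂ p) : ℝ × ℝ × ℝ)
      = k₁ p • ((1:ℝ), (0:ℝ), (0:ℝ)) + k₂ p • ((0:ℝ), (1:ℝ), (0:ℝ))
        + (-p.1 * k₂ p) • ((0:ℝ), (0:ℝ), (1:ℝ)) := by
    simp [Prod.ext_iff]
  have h1 : L (k₁ p, k₂ p, -p.1 * k₂ p) = k₁ p * a + k₂ p * b := by
    rw [hvec, map_add, map_add, map_smul, map_smul, map_smul]
    simp only [ha, hb, pd, hL, smul_eq_mul]
    ring
  have hdet : det2 (k₁ p, k₂ p) (-b, a) = k₁ p * a + k₂ p * b := by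
    simp [det2]
  refine ⟨by rw [h1, hdet], ?_⟩
  rw [h1]
  -- simplify the vector X
  have hX : ((pd (0, 1, 0) lam p - p.1 * pd (0, 0, 1) lam p) • ((1, 0, 0) : ℝ × ℝ × ℝ)
            - pd (1, 0, 0) lam p • ((0, 1, -p.1) : ℝ × ℝ × ℝ)
            - lam p • ((0, 0, 1) : ℝ × ℝ × ℝ)) = (b, -a, a * p.1) := by
    rw [hs]
    simp [Prod.ext_iff, ha, hb]
  rw [hX]
  have hk : k₁ p ≠ 0 ∨ k₂ p ≠ 0 := by
    by_contra h
    push_neg at h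
    exact hknz (by simp [h.1, h.2])
  rw [LinearIndependent.pair_iff]
  constructor
  · intro hD s t hst
    have h1' : s * b + t * k₁ p = 0 := by
      have := congrArg Prod.fst hst
      simpa [smul_eq_mul] using this
    have h2' : s * (-a) + t * k₂ p = 0 := by
      have := congrArg (fun v => v.2.1) hst
      simpa [smul_eq_mul] using this
    have hs0 : s = 0 := by
      have : s * (k₁ p * a + k₂ p * b) = 0 := by linear_combination k₂ p * h1' - k₁ p * h2'
      rcases mul_eq_zero.1 this with h | h
      · exact h
      · exact absurd h hD
    have ht0 : t = 0 := by
      have h3 : t * k₁ p = 0 := by linear_combination h1' - b * hs0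
      have h4 : t * k₂ p = 0 := by linear_combination h2' + a * hs0
      rcases hk with hk | hk
      · exact (mul_eq_zero.1 h3).resolve_right hk
      · exact (mul_eq_zero.1 h4).resolve_right hk
    exact ⟨hs0, ht0⟩
  · intro hli hD
    rcases hk with hk | hk
    · have := hli (k₁ p) (-b) ?_
      · exact hk this.1
      · simp [Prod.ext_iff, smul_eq_mul]
        refine ⟨by ring, by linear_combination -hD, by linear_combination p.1 * hD⟩
    · have := hli (k₂ p) a ?_
      · exact hk this.1
      · simp [Prod.ext_iff, smul_eq_mul]
        refine ⟨by linear_combination hD, by ring, by ring⟩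
end

section
/- Let a, b, c, d : U → ℝ be smooth on open U ⊆ ℝ³ with coordinates (u,v,w), and set h₁ = ad − bc. Consider at a point p with (a,b,c,d)(p) ≠ (0,0,0,0) the map H₁ sending the 3-jet of (a,b,c,d) at p to (h₁, ∂_w h₁, ∂²_w h₁, ∂³_w h₁)(p). Then the derivative of H₁ with respect to the jet coordinates (a, b, c, d, ∂_w a, …, ∂³_w d) has rank 4; that is, (0,0,0,0) is a regular value of H₁ on the set where (a,b,c,d) ≠ 0. -/
/-- The map sending the `w`-jet coordinates `x k i` (the `k`-th `∂_w`-derivative of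
the `i`-th entry of `(a,b,c,d)`, `k ≤ 3`) to `(h₁, ∂_w h₁, ∂_w² h₁, ∂_w³ h₁)` where
`h₁ = ad − bc`, expanded by the Leibniz rule. -/
noncomputable def H₁ (x : Fin 4 → Fin 4 → ℝ) : Fin 4 → ℝ :=
  ![x 0 0 * x 0 3 - x 0 1 * x 0 2,
    x 1 0 * x 0 3 + x 0 0 * x 1 3 - (x 1 1 * x 0 2 + x 0 1 * x 1 2),
    x 2 0 * x 0 3 + 2 * (x 1 0 * x 1 3) + x 0 0 * x 2 3
      - (x 2 1 * x 0 2 + 2 * (x 1 1 * x 1 2) + x 0 1 * x 2 2),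
    x 3 0 * x 0 3 + 3 * (x 2 0 * x 1 3) + 3 * (x 1 0 * x 2 3) + x 0 0 * x 3 3
      - (x 3 1 * x 0 2 + 3 * (x 2 1 * x 1 2) + 3 * (x 1 1 * x 2 2)
          + x 0 1 * x 3 2)]

noncomputable def P (k i : Fin 4) : (Fin 4 → Fin 4 → ℝ) →L[ℝ] ℝ :=
  (ContinuousLinearMap.proj i : (Fin 4 → ℝ) →L[ℝ] ℝ).comp
    (ContinuousLinearMap.proj k : (Fin 4 → Fin 4 → ℝ) →L[ℝ] (Fin 4 → ℝ))

@[simp] lemma P_apply (k i : Fin 4) (v : Fin 4 → Fin 4 → ℝ) : P k i v = v k i := rfl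

lemma hasP (k i : Fin 4) (x : Fin 4 → Fin 4 → ℝ) :
    HasFDerivAt (fun x : Fin 4 → Fin 4 → ℝ => x k i) (P k i) x :=
  (P k i).hasFDerivAt

noncomputable def D (x : Fin 4 → Fin 4 → ℝ) :
    (Fin 4 → Fin 4 → ℝ) →L[ℝ] (Fin 4 → ℝ) :=
  ContinuousLinearMap.pi
  ![(x 0 0 • P 0 3 + x 0 3 • P 0 0) - (x 0 1 • P 0 2 + x 0 2 • P 0 1),
    ((x 1 0 • P 0 3 + x 0 3 • P 1 0) + (x 0 0 • P 1 3 + x 1 3 • P 0 0))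
      - ((x 1 1 • P 0 2 + x 0 2 • P 1 1) + (x 0 1 • P 1 2 + x 1 2 • P 0 1)),
    (((x 2 0 • P 0 3 + x 0 3 • P 2 0) + (2:ℝ) • (x 1 0 • P 1 3 + x 1 3 • P 1 0))
        + (x 0 0 • P 2 3 + x 2 3 • P 0 0))
      - (((x 2 1 • P 0 2 + x 0 2 • P 2 1) + (2:ℝ) • (x 1 1 • P 1 2 + x 1 2 • P 1 1))
        + (x 0 1 • P 2 2 + x 2 2 • P 0 1)),
    ((((x 3 0 • P 0 3 + x 0 3 • P 3 0) + (3:ℝ) • (x 2 0 • P 1 3 + x 1 3 • P 2 0))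
        + (3:ℝ) • (x 1 0 • P 2 3 + x 2 3 • P 1 0)) + (x 0 0 • P 3 3 + x 3 3 • P 0 0))
      - ((((x 3 1 • P 0 2 + x 0 2 • P 3 1) + (3:ℝ) • (x 2 1 • P 1 2 + x 1 2 • P 2 1))
        + (3:ℝ) • (x 1 1 • P 2 2 + x 2 2 • P 1 1)) + (x 0 1 • P 3 2 + x 3 2 • P 0 1))]

lemma hasD (x : Fin 4 → Fin 4 → ℝ) : HasFDerivAt H₁ (D x) x := by
  rw [show H₁ = fun x (i : Fin 4) => H₁ x i from rfl]
  apply hasFDerivAt_pi'.2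
  intro i
  fin_cases i <;>
    simp only [D, H₁, ContinuousLinearMap.proj_pi, Matrix.cons_val_zero, Matrix.cons_val_one,
      Matrix.head_cons, Matrix.cons_val_two, Matrix.tail_cons, Matrix.cons_val_three,
      Matrix.cons_val_fin_one, Fin.isValue]
  · exact ((hasP 0 0 x).mul (hasP 0 3 x)).sub ((hasP 0 1 x).mul (hasP 0 2 x))
  · exact (((hasP 1 0 x).mul (hasP 0 3 x)).add ((hasP 0 0 x).mul (hasP 1 3 x))).sub
      (((hasP 1 1 x).mul (hasP 0 2 x)).add ((hasP 0 1 x).mul (hasP 1 2 x)))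
  · exact ((((hasP 2 0 x).mul (hasP 0 3 x)).add (((hasP 1 0 x).mul (hasP 1 3 x)).const_mul 2)).add
      ((hasP 0 0 x).mul (hasP 2 3 x))).sub
      ((((hasP 2 1 x).mul (hasP 0 2 x)).add (((hasP 1 1 x).mul (hasP 1 2 x)).const_mul 2)).add
      ((hasP 0 1 x).mul (hasP 2 2 x)))
  · exact (((((hasP 3 0 x).mul (hasP 0 3 x)).add (((hasP 2 0 x).mul (hasP 1 3 x)).const_mul 3)).add
      (((hasP 1 0 x).mul (hasP 2 3 x)).const_mul 3)).add ((hasP 0 0 x).mul (hasP 3 3 x))).sub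
      ((((((hasP 3 1 x).mul (hasP 0 2 x)).add (((hasP 2 1 x).mul (hasP 1 2 x)).const_mul 3)).add
      (((hasP 1 1 x).mul (hasP 2 2 x)).const_mul 3)).add ((hasP 0 1 x).mul (hasP 3 2 x))))

lemma fin4 {p : Fin 4 → Prop} (h0 : p 0) (h1 : p 1) (h2 : p 2) (h3 : p 3) :
    ∀ k, p k := fun k =>
  match k with
  | 0 => h0
  | 1 => h1
  | 2 => h2
  | 3 => h3

lemma solve (e f g h : ℝ) (he : e ≠ 0) (t : Fin 4 → ℝ) :
    ∃ z : Fin 4 → ℝ, e * z 0 = t 0 ∧ e * z 1 + f * z 0 = t 1 ∧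
      e * z 2 + 2 * f * z 1 + g * z 0 = t 2 ∧
      e * z 3 + 3 * f * z 2 + 3 * g * z 1 + h * z 0 = t 3 := by
  obtain ⟨z0, hz0⟩ : ∃ z0, e * z0 = t 0 := ⟨t 0 / e, by field_simp⟩
  obtain ⟨z1, hz1⟩ : ∃ z1, e * z1 = t 1 - f * z0 := ⟨(t 1 - f * z0) / e, by field_simp⟩
  obtain ⟨z2, hz2⟩ : ∃ z2, e * z2 = t 2 - 2 * f * z1 - g * z0 :=
    ⟨(t 2 - 2 * f * z1 - g * z0) / e, by field_simp⟩
  obtain ⟨z3, hz3⟩ : ∃ z3, e * z3 = t 3 - 3 * f * z2 - 3 * g * z1 - h * z0 :=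
    ⟨(t 3 - 3 * f * z2 - 3 * g * z1 - h * z0) / e, by field_simp⟩
  refine ⟨![z0, z1, z2, z3], ?_, ?_, ?_, ?_⟩ <;>
    simp only [Matrix.cons_val_zero, Matrix.cons_val_one, Matrix.head_cons,
      Matrix.cons_val_two, Matrix.tail_cons, Matrix.cons_val_three] <;> linarith

/-- `(0,0,0,0)` is a regular value of `H₁` on the set where `(a,b,c,d) ≠ 0`:
at every zero of `H₁` with `x 0 ≠ 0` the derivative of `H₁` is surjective. -/
theorem H₁_regular_value (x : Fin 4 → Fin 4 → ℝ)
    (hx : x 0 ≠ 0) (hzero : H₁ x = 0) :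
    Function.Surjective (fderiv ℝ H₁ x) := by
  rw [(hasD x).fderiv]
  intro t
  rw [Function.ne_iff] at hx
  obtain ⟨i, hi⟩ := hx
  fin_cases i
  · -- x 0 0 ≠ 0, use column 3
    obtain ⟨z, h0, h1, h2, h3⟩ := solve (x 0 0) (x 1 0) (x 2 0) (x 3 0) hi t
    refine ⟨fun k => ![0, 0, 0, z k], ?_⟩
    refine funext (fin4 ?_ ?_ ?_ ?_) <;>
      simp only [D, ContinuousLinearMap.pi_apply, Matrix.cons_val_zero, Matrix.cons_val_one,
        Matrix.head_cons, Matrix.cons_val_two, Matrix.tail_cons, Matrix.cons_val_three,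
        ContinuousLinearMap.add_apply, ContinuousLinearMap.sub_apply,
        ContinuousLinearMap.coe_smul', Pi.smul_apply, P_apply, smul_eq_mul,
        Pi.zero_apply] <;> linarith
  · -- x 0 1 ≠ 0, use column 2
    obtain ⟨z, h0, h1, h2, h3⟩ := solve (-(x 0 1)) (-(x 1 1)) (-(x 2 1)) (-(x 3 1)) (neg_ne_zero.2 hi) t
    refine ⟨fun k => ![0, 0, z k, 0], ?_⟩
    refine funext (fin4 ?_ ?_ ?_ ?_) <;>
      simp only [D, ContinuousLinearMap.pi_apply, Matrix.cons_val_zero, Matrix.cons_val_one,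
        Matrix.head_cons, Matrix.cons_val_two, Matrix.tail_cons, Matrix.cons_val_three,
        ContinuousLinearMap.add_apply, ContinuousLinearMap.sub_apply,
        ContinuousLinearMap.coe_smul', Pi.smul_apply, P_apply, smul_eq_mul,
        Pi.zero_apply] <;> linarith
  · obtain ⟨z, h0, h1, h2, h3⟩ := solve (-(x 0 2)) (-(x 1 2)) (-(x 2 2)) (-(x 3 2)) (neg_ne_zero.2 hi) t
    refine ⟨fun k => ![0, z k, 0, 0], ?_⟩
    refine funext (fin4 ?_ ?_ ?_ ?_) <;>
      simp only [D, ContinuousLinearMap.pi_apply, Matrix.cons_val_zero, Matrix.cons_val_one,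
        Matrix.head_cons, Matrix.cons_val_two, Matrix.tail_cons, Matrix.cons_val_three,
        ContinuousLinearMap.add_apply, ContinuousLinearMap.sub_apply,
        ContinuousLinearMap.coe_smul', Pi.smul_apply, P_apply, smul_eq_mul,
        Pi.zero_apply] <;> linarith
  · obtain ⟨z, h0, h1, h2, h3⟩ := solve (x 0 3) (x 1 3) (x 2 3) (x 3 3) hi t
    refine ⟨fun k => ![z k, 0, 0, 0], ?_⟩
    refine funext (fin4 ?_ ?_ ?_ ?_) <;>
      simp only [D, ContinuousLinearMap.pi_apply, Matrix.cons_val_zero, Matrix.cons_val_one,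
        Matrix.head_cons, Matrix.cons_val_two, Matrix.tail_cons, Matrix.cons_val_three,
        ContinuousLinearMap.add_apply, ContinuousLinearMap.sub_apply,
        ContinuousLinearMap.coe_smul', Pi.smul_apply, P_apply, smul_eq_mul,
        Pi.zero_apply] <;> linarith
end
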